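/- Let λ > 0 and β ∈ (0,1). For any embeddings U, V and weight vector w such that U and V are not both zero, the rescaled point (βU, βV, β⁻¹w) satisfies F(βU, βV, β⁻¹w) < F(U, V, w), where F is the generalized CF objective with the element-wise minimum interaction f(u,v) = min(u,v). In particular, since β > 0, min(βu_i, βv_j) = β·min(u_i, v_j) componentwise, so the data-fitting term is unchanged while the regularization term is strictly decreased. -/
import Mathlib


open Finset

/-- Generalized CF objective with the element-wise minimum interaction `f(u,v) = min(u,v)`:
`F(U,V,w) = Σ_{(i,j)∈Ω} ℓ(⟨w, min(u_i, v_j)⟩, O_{ij}) + (λ/2)Σ_i ‖u_i‖² + (λ/2)Σ_j ‖v_j‖²`. -/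
noncomputable def cfObjMin {k m n : ℕ} (lam : ℝ) (Ω : Finset (Fin m × Fin n))
    (O : Fin m × Fin n → ℝ) (ℓ : ℝ × ℝ → ℝ)
    (U : Fin m → Fin k → ℝ) (V : Fin n → Fin k → ℝ) (w : Fin k → ℝ) : ℝ :=
  (∑ p ∈ Ω, ℓ (∑ l, w l * min (U p.1 l) (V p.2 l), O p))
    + lam / 2 * ∑ i, ∑ l, (U i l) ^ 2
    + lam / 2 * ∑ j, ∑ l, (V j l) ^ 2

/-- For `λ > 0` and `β ∈ (0,1)`, if `U` and `V` are not both zero, then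
`F(βU, βV, β⁻¹w) < F(U, V, w)` for the element-wise minimum interaction; since `β > 0`,
`min(βu, βv) = β·min(u, v)` componentwise, so the data-fitting term is unchanged
while the regularization term strictly decreases. -/
theorem rescaling_decreases_min_objective {k m n : ℕ} (lam : ℝ) (hlam : 0 < lam)
    (β : ℝ) (hβ : β ∈ Set.Ioo (0 : ℝ) 1)
    (Ω : Finset (Fin m × Fin n)) (O : Fin m × Fin n → ℝ) (ℓ : ℝ × ℝ → ℝ)
    (U : Fin m → Fin k → ℝ) (V : Fin n → Fin k → ℝ) (w : Fin k → ℝ)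
    (hUV : ¬ (U = 0 ∧ V = 0)) :
    cfObjMin lam Ω O ℓ (fun i l => β * U i l) (fun j l => β * V j l)
        (fun l => β⁻¹ * w l)
      < cfObjMin lam Ω O ℓ U V w ∧
    (∀ i j l, min (β * U i l) (β * V j l) = β * min (U i l) (V j l)) ∧
    (∀ i j, (∑ l, (β⁻¹ * w l) * min (β * U i l) (β * V j l))
        = ∑ l, w l * min (U i l) (V j l)) ∧
    (lam / 2 * ∑ i, ∑ l, (β * U i l) ^ 2 + lam / 2 * ∑ j, ∑ l, (β * V j l) ^ 2
      < lam / 2 * ∑ i, ∑ l, (U i l) ^ 2 + lam / 2 * ∑ j, ∑ l, (V j l) ^ 2) := by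
  obtain ⟨hβ0, hβ1⟩ := hβ
  have hβne : β ≠ 0 := ne_of_gt hβ0
  have hmin : ∀ (i : Fin m) (j : Fin n) (l : Fin k),
      min (β * U i l) (β * V j l) = β * min (U i l) (V j l) := fun i j l => by
    rw [mul_min_of_nonneg _ _ hβ0.le]
  have hdot : ∀ (i : Fin m) (j : Fin n),
      (∑ l, (β⁻¹ * w l) * min (β * U i l) (β * V j l))
        = ∑ l, w l * min (U i l) (V j l) := fun i j => by
    refine Finset.sum_congr rfl fun l _ => ?_
    rw [hmin i j l]
    field_simp
  -- regularization sums
  set S : ℝ := (∑ i, ∑ l, (U i l) ^ 2) + ∑ j, ∑ l, (V j l) ^ 2 with hS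
  have hSnonneg : ∀ (T : ℕ) (W : Fin T → Fin k → ℝ), 0 ≤ ∑ i, ∑ l, (W i l) ^ 2 :=
    fun T W => Finset.sum_nonneg fun i _ => Finset.sum_nonneg fun l _ => sq_nonneg _
  have hSpos : 0 < S := by
    rcases (add_nonneg (hSnonneg m U) (hSnonneg n V)).lt_or_eq with h | h
    · exact h
    · exfalso
      replace h := h.symm
      apply hUV
      have hU0 : (∑ i, ∑ l, (U i l) ^ 2) = 0 := by
        have := hSnonneg m U
        have := hSnonneg n V
        linarith [hS ▸ h]
      have hV0 : (∑ j, ∑ l, (V j l) ^ 2) = 0 := by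
        have := hSnonneg m U
        have := hSnonneg n V
        linarith [hS ▸ h]
      constructor
      · funext i l
        have h1 := (Finset.sum_eq_zero_iff_of_nonneg (fun i _ =>
          Finset.sum_nonneg fun l _ => sq_nonneg (U i l))).mp hU0 i (Finset.mem_univ i)
        have h2 := (Finset.sum_eq_zero_iff_of_nonneg (fun l _ => sq_nonneg (U i l))).mp h1 l
          (Finset.mem_univ l)
        exact pow_eq_zero_iff (by norm_num) |>.mp h2
      · funext j l
        have h1 := (Finset.sum_eq_zero_iff_of_nonneg (fun j _ =>
          Finset.sum_nonneg fun l _ => sq_nonneg (V j l))).mp hV0 j (Finset.mem_univ j)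
        have h2 := (Finset.sum_eq_zero_iff_of_nonneg (fun l _ => sq_nonneg (V j l))).mp h1 l
          (Finset.mem_univ l)
        exact pow_eq_zero_iff (by norm_num) |>.mp h2
  have hscale : ∀ (T : ℕ) (W : Fin T → Fin k → ℝ),
      (∑ i, ∑ l, (β * W i l) ^ 2) = β ^ 2 * ∑ i, ∑ l, (W i l) ^ 2 := by
    intro T W
    rw [Finset.mul_sum]
    refine Finset.sum_congr rfl fun i _ => ?_
    rw [Finset.mul_sum]
    exact Finset.sum_congr rfl fun l _ => by ring
  have hreg : lam / 2 * ∑ i, ∑ l, (β * U i l) ^ 2 + lam / 2 * ∑ j, ∑ l, (β * V j l) ^ 2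
      < lam / 2 * ∑ i, ∑ l, (U i l) ^ 2 + lam / 2 * ∑ j, ∑ l, (V j l) ^ 2 := by
    rw [hscale m U, hscale n V]
    have hβ2 : β ^ 2 < 1 := by nlinarith
    have key : 0 < lam / 2 * ((1 - β ^ 2) * S) := by
      apply mul_pos (by linarith) (mul_pos (by linarith) hSpos)
    rw [hS] at key
    ring_nf at key ⊢
    linarith
  refine ⟨?_, hmin, hdot, hreg⟩
  unfold cfObjMin
  have hloss : (∑ p ∈ Ω, ℓ (∑ l, (fun l => β⁻¹ * w l) l *
        min ((fun i l => β * U i l) p.1 l) ((fun j l => β * V j l) p.2 l), O p))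
      = ∑ p ∈ Ω, ℓ (∑ l, w l * min (U p.1 l) (V p.2 l), O p) := by
    refine Finset.sum_congr rfl fun p _ => ?_
    simp only
    rw [hdot p.1 p.2]
  simp only at hloss ⊢
  rw [hloss]
  linarith [hreg]
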